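/- For t ≥ 3 and ij ∈ E(G), the neighborhood in S[G,t] of the vertex {i,j}_t (the contraction of the top-level linking edge) is exactly { ijj...j{j,l}_2 : jl ∈ E(G) } ∪ { jii...i{i,l}_2 : il ∈ E(G) }. -/

import Mathlib

variable {V : Type*}

/-- Adjacency of the generalized Sierpiński graph `S(G,t)` on words of length `t`:
`u` and `v` are adjacent iff there is an index `i` with `u j = v j` for `j < i`,
`u i` adjacent to `v i` in `G`, and `u j = v i`, `v j = u i` for `j > i`. -/
def sierAdj (G : SimpleGraph V) (t : ℕ) (u v : Fin t → V) : Prop :=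
  ∃ i : Fin t, (∀ j, j < i → u j = v j) ∧ G.Adj (u i) (v i) ∧
    ∀ j, i < j → u j = v i ∧ v j = u i

/-- The generalized Sierpiński graph `S(G,t)`. -/
def sier (G : SimpleGraph V) (t : ℕ) : SimpleGraph (Fin t → V) where
  Adj := sierAdj G t
  symm := ⟨by
    rintro u v ⟨i, h1, h2, h3⟩
    exact ⟨i, fun j hj => (h1 j hj).symm, h2.symm,
      fun j hj => ⟨(h3 j hj).2, (h3 j hj).1⟩⟩⟩
  loopless := ⟨by
    rintro u ⟨i, h1, h2, h3⟩
    exact G.loopless.irrefl _ h2⟩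

/-- `linkingAt G t p u v` : `uv` is a linking edge of `S(G,t)` appearing at
(0-indexed) position `p < t - 1`; in the paper's terminology this linking edge is
produced at step `t - p`, and its contraction is a vertex contracted at step `t - p`. -/
def linkingAt (G : SimpleGraph V) (t p : ℕ) (u v : Fin t → V) : Prop :=
  ∃ i : Fin t, i.val = p ∧ i.val + 1 < t ∧ (∀ j, j < i → u j = v j) ∧
    G.Adj (u i) (v i) ∧ ∀ j, i < j → u j = v i ∧ v j = u i

/-- `uv` is a linking edge of `S(G,t)` (an edge appearing at some step `≥ 2`). -/
def linking (G : SimpleGraph V) (t : ℕ) (u v : Fin t → V) : Prop :=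
  ∃ p, linkingAt G t p u v

/-- The equivalence relation on words generated by identifying the two endpoints
of each linking edge. -/
def gasketSetoid (G : SimpleGraph V) (t : ℕ) : Setoid (Fin t → V) :=
  Relation.EqvGen.setoid (linking G t)

/-- The generalized Sierpiński gasket graph `S[G,t]`, obtained from `S(G,t)` by
contracting all linking edges. -/
def gasket (G : SimpleGraph V) (t : ℕ) :
    SimpleGraph (Quotient (gasketSetoid G t)) where
  Adj x y := x ≠ y ∧ ∃ u v, Quotient.mk (gasketSetoid G t) u = x ∧
    Quotient.mk (gasketSetoid G t) v = y ∧ sierAdj G t u v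
  symm := ⟨by
    rintro x y ⟨hxy, u, v, hu, hv, h⟩
    exact ⟨hxy.symm, v, u, hv, hu, (sier G t).adj_symm h⟩⟩
  loopless := ⟨fun _ h => h.1 rfl⟩

/-- The expanded word `i j j ... j`; for `ij ∈ E(G)` its class in `S[G,t]` is the
contracted vertex `{i,j}_t`. -/
def topWord (t : ℕ) (i j : V) : Fin t → V := fun k => if k.val = 0 then i else j

/-- The expanded word `i j j ... j l` (first letter `i`, last letter `l`, `j` in
between); for `jl ∈ E(G)` its class in `S[G,t]` is the vertex `ijj...j{j,l}_2`. -/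
def tailWord (t : ℕ) (i j l : V) : Fin t → V :=
  fun k => if k.val = 0 then i else if k.val = t - 1 then l else j

/-! The words adjacent to `ij…j` in `S(G,t)` are `ji…i`, across the top linking edge, and the
words `ij…jl` with `jl ∈ E(G)`. The only linking edge at `ij…j` or `ji…i` is the one joining
them, so these two words form a whole contraction class; hence the neighbours of `{i,j}_t` are
the classes of the words `ij…jl` and `ji…il`, none of which is `{i,j}_t` itself. -/

namespace SierpinskiGasket

variable {G : SimpleGraph V} {t : ℕ} {i j l : V} {u v : Fin t → V}

def SierAdjAt (G : SimpleGraph V) (t : ℕ) (p : Fin t) (u v : Fin t → V) : Prop :=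
  (∀ k, k < p → u k = v k) ∧ G.Adj (u p) (v p) ∧ ∀ k, p < k → u k = v p ∧ v k = u p

theorem sierAdj_iff_exists_sierAdjAt : sierAdj G t u v ↔ ∃ p, SierAdjAt G t p u v :=
  Iff.rfl

theorem linking_iff_exists_sierAdjAt :
    linking G t u v ↔ ∃ p : Fin t, p.val + 1 < t ∧ SierAdjAt G t p u v := by
  constructor
  · rintro ⟨_, p, -, hp, h⟩
    exact ⟨p, hp, h⟩
  · rintro ⟨p, hp, h⟩
    exact ⟨p, p, rfl, hp, h⟩

theorem linking_symm (h : linking G t u v) : linking G t v u := by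
  obtain ⟨p, k, hk, hkt, hlt, hadj, hgt⟩ := h
  exact ⟨p, k, hk, hkt, fun m hm => (hlt m hm).symm, hadj.symm,
    fun m hm => (hgt m hm).symm⟩

theorem topWord_apply (k : Fin t) : topWord t i j k = if k.val = 0 then i else j := rfl

theorem tailWord_apply (k : Fin t) :
    tailWord t i j l k = if k.val = 0 then i else if k.val = t - 1 then l else j := rfl

/-- A change at an inner position `p` is impossible: it would force `v p = j = u p`. -/
theorem SierAdjAt.topWord_cases (ht : 3 ≤ t) {p : Fin t} (h : SierAdjAt G t p (topWord t i j) v) :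
    (p.val = 0 ∧ v = topWord t j i) ∨
      (p.val = t - 1 ∧ ∃ l, G.Adj j l ∧ v = tailWord t i j l) := by
  obtain ⟨hlt, hadj, hgt⟩ := h
  simp only [topWord_apply] at hlt hadj hgt
  by_cases hp0 : p.val = 0
  · have hvp : v p = j := by
      simpa using (hgt ⟨1, by omega⟩ (by simp only [Fin.lt_def]; omega)).1.symm
    refine Or.inl ⟨hp0, funext fun k => ?_⟩
    by_cases hk0 : k.val = 0
    · rw [show k = p from Fin.ext (by omega), hvp, topWord_apply, if_pos hp0]
    · rw [(hgt k (by simp only [Fin.lt_def]; omega)).2, topWord_apply, if_pos hp0, if_neg hk0]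
  · have hpt : p.val = t - 1 := by
      by_contra hpt
      have hvp : v p = j := by
        simpa [show t - 1 ≠ 0 by omega] using
          (hgt ⟨t - 1, by omega⟩ (by simp only [Fin.lt_def]; omega)).1.symm
      rw [if_neg hp0, hvp] at hadj
      exact G.loopless.irrefl j hadj
    rw [if_neg hp0] at hadj
    refine Or.inr ⟨hpt, v p, hadj, funext fun k => ?_⟩
    rcases lt_or_eq_of_le (Fin.le_iff_val_le_val.2 (show k.val ≤ p.val by omega)) with hk | rfl
    · have hkt : k.val ≠ t - 1 := by simp only [Fin.lt_def] at hk; omega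
      rw [← hlt k hk, tailWord_apply, if_neg hkt]
    · rw [tailWord_apply, if_neg hp0, if_pos hpt]

theorem eq_topWord_of_linking_topWord (ht : 3 ≤ t) (h : linking G t (topWord t i j) v) :
    v = topWord t j i := by
  obtain ⟨p, hp, h⟩ := linking_iff_exists_sierAdjAt.1 h
  rcases h.topWord_cases ht with ⟨-, hv⟩ | ⟨hpt, -⟩
  · exact hv
  · omega

theorem sierAdj_topWord_cases (ht : 3 ≤ t) (h : sierAdj G t (topWord t i j) v) :
    v = topWord t j i ∨ ∃ l, G.Adj j l ∧ v = tailWord t i j l := by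
  obtain ⟨p, h⟩ := sierAdj_iff_exists_sierAdjAt.1 h
  exact (h.topWord_cases ht).imp And.right And.right

theorem linking_topWord_topWord (ht : 3 ≤ t) (hij : G.Adj i j) :
    linking G t (topWord t i j) (topWord t j i) := by
  refine linking_iff_exists_sierAdjAt.2 ⟨⟨0, by omega⟩, show 0 + 1 < t by omega,
    fun k hk => absurd hk (by simp [Fin.lt_def]), by simpa [topWord_apply] using hij,
    fun k hk => ?_⟩
  have hk0 : k.val ≠ 0 := by rw [Fin.lt_def] at hk; omega
  simp [topWord_apply, hk0]

theorem sierAdj_topWord_tailWord (ht : 3 ≤ t) (hjl : G.Adj j l) :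
    sierAdj G t (topWord t i j) (tailWord t i j l) := by
  refine ⟨⟨t - 1, by omega⟩, fun k hk => ?_, ?_, fun k hk => ?_⟩
  · have hkt : k.val ≠ t - 1 := by simp only [Fin.lt_def] at hk; omega
    simp only [topWord_apply, tailWord_apply, if_neg hkt]
  · simpa [topWord_apply, tailWord_apply, show t - 1 ≠ 0 by omega] using hjl
  · exact absurd hk (by simp only [Fin.lt_def]; omega)

theorem topWord_pair_iff_of_eqvGen (ht : 3 ≤ t) (h : Relation.EqvGen (linking G t) u v) :
    (u = topWord t i j ∨ u = topWord t j i) ↔ (v = topWord t i j ∨ v = topWord t j i) := by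
  induction h with
  | rel a b hab =>
    constructor
    · rintro (rfl | rfl)
      exacts [Or.inr (eq_topWord_of_linking_topWord ht hab),
        Or.inl (eq_topWord_of_linking_topWord ht hab)]
    · rintro (rfl | rfl)
      exacts [Or.inr (eq_topWord_of_linking_topWord ht (linking_symm hab)),
        Or.inl (eq_topWord_of_linking_topWord ht (linking_symm hab))]
  | refl => exact Iff.rfl
  | symm _ _ _ ih => exact ih.symm
  | trans _ _ _ _ _ ih₁ ih₂ => exact ih₁.trans ih₂

theorem mk_eq_mk_topWord_iff (ht : 3 ≤ t) (hij : G.Adj i j) :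
    Quotient.mk (gasketSetoid G t) u = Quotient.mk (gasketSetoid G t) (topWord t i j) ↔
      u = topWord t i j ∨ u = topWord t j i := by
  constructor
  · intro h
    exact (topWord_pair_iff_of_eqvGen ht (Quotient.exact h)).2 (Or.inl rfl)
  · rintro (rfl | rfl)
    · rfl
    · exact (Quotient.sound (Relation.EqvGen.rel _ _ (linking_topWord_topWord ht hij))).symm

theorem mk_topWord_comm (ht : 3 ≤ t) (hij : G.Adj i j) :
    Quotient.mk (gasketSetoid G t) (topWord t j i) =
      Quotient.mk (gasketSetoid G t) (topWord t i j) :=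
  (mk_eq_mk_topWord_iff ht hij).2 (Or.inr rfl)

theorem mk_tailWord_ne_mk_topWord (ht : 3 ≤ t) (hij : G.Adj i j) (hjl : G.Adj j l) :
    Quotient.mk (gasketSetoid G t) (tailWord t i j l) ≠
      Quotient.mk (gasketSetoid G t) (topWord t i j) := by
  intro h
  rcases (mk_eq_mk_topWord_iff ht hij).1 h with h | h
  · refine hjl.ne' ?_
    simpa [topWord_apply, tailWord_apply, show t - 1 ≠ 0 by omega] using
      congrFun h ⟨t - 1, by omega⟩
  · exact hij.ne (by simpa [topWord_apply, tailWord_apply] using congrFun h ⟨0, by omega⟩)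

end SierpinskiGasket

open SierpinskiGasket in
/-- for `t ≥ 3` and `ij ∈ E(G)`, the neighborhood in `S[G,t]` of the
top contracted vertex `{i,j}_t` is exactly
`{ ijj...j{j,l}_2 : jl ∈ E(G) } ∪ { jii...i{i,l}_2 : il ∈ E(G) }`. -/
theorem stmt_19 (G : SimpleGraph V) (t : ℕ) (ht : 3 ≤ t) (i j : V) (hij : G.Adj i j) :
    (gasket G t).neighborSet (Quotient.mk (gasketSetoid G t) (topWord t i j)) =
      {x | ∃ l, G.Adj j l ∧ x = Quotient.mk (gasketSetoid G t) (tailWord t i j l)} ∪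
      {x | ∃ l, G.Adj i l ∧ x = Quotient.mk (gasketSetoid G t) (tailWord t j i l)} := by
  ext x
  constructor
  · rintro ⟨hne, u, v, hu, rfl, hadj⟩
    rcases (mk_eq_mk_topWord_iff ht hij).1 hu with rfl | rfl
    · rcases sierAdj_topWord_cases ht hadj with rfl | ⟨l, hjl, rfl⟩
      · exact absurd (mk_topWord_comm ht hij).symm hne
      · exact Or.inl ⟨l, hjl, rfl⟩
    · rcases sierAdj_topWord_cases ht hadj with rfl | ⟨l, hil, rfl⟩
      · exact absurd rfl hne
      · exact Or.inr ⟨l, hil, rfl⟩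
  · rintro (⟨l, hjl, rfl⟩ | ⟨l, hil, rfl⟩)
    · exact ⟨(mk_tailWord_ne_mk_topWord ht hij hjl).symm, _, _, rfl, rfl,
        sierAdj_topWord_tailWord ht hjl⟩
    · rw [← mk_topWord_comm ht hij]
      exact ⟨(mk_tailWord_ne_mk_topWord ht hij.symm hil).symm, _, _, rfl, rfl,
        sierAdj_topWord_tailWord ht hil⟩
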